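/- arXiv:1901.03273 — 5 statements merged into one kernel-verified Lean document; each statement's English description precedes it below -/
import Mathlib

section
/- Let A ⊆ ℝᵐ × ℝⁿ, let U ⊆ ℝᵐ be nonempty and open, let ε > 0, and let f : U → ℝⁿ be continuous such that for every x ∈ U, f(x) is an ε-isolated point of the fiber A_x = {y : (x,y) ∈ A}. Then there exist a nonempty open V ⊆ U and a nonempty open W ⊆ ℝⁿ such that A ∩ (V × W) equals the graph of the restriction of f to V. -/
/-- if `f : U → ℝⁿ` is continuous on the nonempty open `U` and `f x` is an
ε-isolated element of the fiber `A_x` for every `x ∈ U`, then there are nonempty open sets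
`V ⊆ U` and `W ⊆ ℝⁿ` with `A ∩ (V × W) = Γ(f|_V)`. -/
theorem stmt4 {m n : ℕ} (A : Set ((Fin m → ℝ) × (Fin n → ℝ))) (U : Set (Fin m → ℝ))
    (hUne : U.Nonempty) (hUo : IsOpen U) (ε : ℝ) (hε : 0 < ε)
    (f : (Fin m → ℝ) → (Fin n → ℝ)) (hf : ContinuousOn f U)
    (hmem : ∀ x ∈ U, (x, f x) ∈ A)
    (hiso : ∀ x ∈ U, ∀ y, (x, y) ∈ A → y ≠ f x → ε ≤ ‖f x - y‖) :
    ∃ (V : Set (Fin m → ℝ)) (W : Set (Fin n → ℝ)), IsOpen V ∧ V.Nonempty ∧ V ⊆ U ∧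
      IsOpen W ∧ W.Nonempty ∧
      A ∩ V ×ˢ W = {p | p.1 ∈ V ∧ p.2 = f p.1} := by
  obtain ⟨x₀, hx₀⟩ := hUne
  have hca : ContinuousAt f x₀ := hf.continuousAt (hUo.mem_nhds hx₀)
  rw [Metric.continuousAt_iff] at hca
  obtain ⟨δ, hδ, hδf⟩ := hca (ε / 4) (by linarith)
  refine ⟨Metric.ball x₀ δ ∩ U, Metric.ball (f x₀) (ε / 4),
    Metric.isOpen_ball.inter hUo, ⟨x₀, by simp [hδ], hx₀⟩, Set.inter_subset_right,
    Metric.isOpen_ball, ⟨f x₀, Metric.mem_ball_self (by linarith)⟩, ?_⟩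
  ext ⟨x, y⟩
  simp only [Set.mem_inter_iff, Set.mem_prod, Set.mem_setOf_eq]
  constructor
  · rintro ⟨hA, ⟨hxb, hxU⟩, hyW⟩
    refine ⟨⟨hxb, hxU⟩, ?_⟩
    by_contra hne
    have h1 : ε ≤ ‖f x - y‖ := hiso x hxU y hA hne
    have h2 : dist (f x) (f x₀) < ε / 4 := hδf (Metric.mem_ball.mp hxb)
    have h3 : dist y (f x₀) < ε / 4 := Metric.mem_ball.mp hyW
    have h4 : ‖f x - y‖ ≤ dist (f x) (f x₀) + dist y (f x₀) := by
      rw [← dist_eq_norm]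
      exact dist_triangle_right _ _ _
    linarith
  · rintro ⟨⟨hxb, hxU⟩, rfl⟩
    exact ⟨hmem x hxU, ⟨hxb, hxU⟩, Metric.mem_ball.mpr (hδf (Metric.mem_ball.mp hxb))⟩
end

section
/- Fix ε > 0. Let U ⊆ ℝᵐ be open and let A ⊆ U × ℝⁿ be vertically bounded (there is a bounded open set W ⊆ ℝⁿ with A_x ⊆ W for all x) such that the map x ↦ closure(A_x) is continuous from U to the space of compact subsets of ℝⁿ with the Hausdorff metric. Then the set of (x,y) ∈ A such that y is ε-isolated in A_x is closed in A. -/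
/-- if `A ⊆ U × ℝⁿ` is vertically bounded and `x ↦ closure (A_x)` is continuous
with respect to the Hausdorff metric, then for fixed `ε > 0` the set of `(x, y) ∈ A` such
that `y` is ε-isolated in `A_x` is closed in `A`. -/
theorem stmt5 {m n : ℕ} (ε : ℝ) (hε : 0 < ε) (U : Set (Fin m → ℝ)) (hU : IsOpen U)
    (A : Set ((Fin m → ℝ) × (Fin n → ℝ)))
    (hAU : ∀ p ∈ A, p.1 ∈ U)
    (hvb : ∃ W : Set (Fin n → ℝ), IsOpen W ∧ Bornology.IsBounded W ∧
      ∀ x, {y | (x, y) ∈ A} ⊆ W)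
    (hcont : ∀ x ∈ U, ∀ δ : ℝ, 0 < δ → ∃ η > (0 : ℝ), ∀ x' ∈ U, dist x x' < η →
      Metric.hausdorffDist (closure {y | (x, y) ∈ A}) (closure {y | (x', y) ∈ A}) < δ) :
    A ∩ closure {p | p ∈ A ∧ ∀ q, (p.1, q) ∈ A → q ≠ p.2 → ε ≤ ‖p.2 - q‖} ⊆
      {p | p ∈ A ∧ ∀ q, (p.1, q) ∈ A → q ≠ p.2 → ε ≤ ‖p.2 - q‖} := by
  rintro p ⟨hpA, hpcl⟩
  refine ⟨hpA, ?_⟩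
  intro q hq hqne
  by_contra hlt
  push_neg at hlt
  obtain ⟨W, hWo, hWb, hWsub⟩ := hvb
  set r : ℝ := ‖p.2 - q‖ with hr
  have hr0 : 0 < r := by
    rw [hr, norm_sub_pos_iff]
    exact fun h => hqne h.symm
  set δ : ℝ := min ((ε - r) / 3) (r / 3) with hδdef
  have hδ0 : 0 < δ := lt_min (by linarith) (by linarith)
  obtain ⟨η, hη0, hηP⟩ := hcont p.1 (hAU p hpA) δ hδ0
  obtain ⟨p', hp'S, hpp'⟩ := Metric.mem_closure_iff.mp hpcl (min η δ) (lt_min hη0 hδ0)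
  obtain ⟨hp'A, hp'iso⟩ := hp'S
  have hd1 : dist p.1 p'.1 < η := by
    calc dist p.1 p'.1 ≤ dist p p' := le_max_left _ _
    _ < min η δ := hpp'
    _ ≤ η := min_le_left _ _
  have hd2 : dist p.2 p'.2 < δ := by
    calc dist p.2 p'.2 ≤ dist p p' := le_max_right _ _
    _ < min η δ := hpp'
    _ ≤ δ := min_le_right _ _
  have hH := hηP p'.1 (hAU p' hp'A) hd1
  have hqmem : q ∈ {y | (p.1, y) ∈ A} := hq
  have hp'2mem : p'.2 ∈ {y | (p'.1, y) ∈ A} := by simpa using hp'A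
  have hfin : EMetric.hausdorffEdist (closure {y | (p.1, y) ∈ A})
      (closure {y | (p'.1, y) ∈ A}) ≠ ⊤ := by
    apply Metric.hausdorffEdist_ne_top_of_nonempty_of_bounded
    · exact ⟨q, subset_closure hqmem⟩
    · exact ⟨p'.2, subset_closure hp'2mem⟩
    · exact ((hWb.subset (hWsub p.1)).closure)
    · exact ((hWb.subset (hWsub p'.1)).closure)
  obtain ⟨q', hq'mem, hqq'⟩ :=
    Metric.exists_dist_lt_of_hausdorffDist_lt (subset_closure hqmem) hH hfin
  -- the isolation property extends to the closure of the fiber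
  have key : ∀ y', y' ∈ closure {y | (p'.1, y) ∈ A} → y' ≠ p'.2 → ε ≤ dist p'.2 y' := by
    intro y' hy' hne
    apply le_of_forall_pos_le_add
    intro θ hθ
    have hdy : 0 < dist y' p'.2 := dist_pos.mpr hne
    obtain ⟨y, hy, hy'y⟩ := Metric.mem_closure_iff.mp hy' (min θ (dist y' p'.2))
      (lt_min hθ hdy)
    have hyne : y ≠ p'.2 := by
      intro h
      rw [h] at hy'y
      exact absurd hy'y (not_lt.mpr (min_le_right _ _))
    have hεy := hp'iso y hy hyne
    rw [← dist_eq_norm] at hεy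
    calc ε ≤ dist p'.2 y := hεy
      _ ≤ dist p'.2 y' + dist y' y := dist_triangle _ _ _
      _ ≤ dist p'.2 y' + θ := by
          have : dist y' y ≤ θ := le_of_lt (lt_of_lt_of_le hy'y (min_le_left _ _))
          linarith
  have hrq : dist p.2 q = r := dist_eq_norm p.2 q
  have hδr : δ ≤ r / 3 := min_le_right _ _
  have hδε : δ ≤ (ε - r) / 3 := min_le_left _ _
  have hq'ne : q' ≠ p'.2 := by
    intro h
    have h1 : dist p.2 q ≤ dist p.2 p'.2 + dist p'.2 q := dist_triangle _ _ _
    have h2 : dist p'.2 q = dist q q' := by rw [h, dist_comm]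
    rw [hrq, h2] at h1
    linarith
  have hfar := key q' hq'mem hq'ne
  have hnear : dist p'.2 q' < ε := by
    calc dist p'.2 q' ≤ dist p'.2 p.2 + dist p.2 q + dist q q' := by
          have h1 := dist_triangle p'.2 p.2 q'
          have h2 := dist_triangle p.2 q q'
          linarith
      _ < δ + r + δ := by rw [dist_comm p'.2 p.2, hrq]; linarith
      _ ≤ ε := by linarith
  linarith
end

section
/- Let E ⊆ ℝ be compact. If T(Eⁿ) is nowhere dense in ℝ for every ℚ-linear map T : ℝⁿ → ℝ and every n ≥ 1, then the subgroup of (ℝ,+) generated by E is not equal to ℝ. -/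
/-- if `E ⊆ ℝ` is compact and `T(Eⁿ)` is nowhere dense for every ℚ-linear map
`T : ℝⁿ → ℝ` (`n ≥ 1`), then the subgroup of `(ℝ, +)` generated by `E` is not all of ℝ. -/
theorem stmt6 (E : Set ℝ) (hE : IsCompact E)
    (h : ∀ n : ℕ, 1 ≤ n → ∀ T : (Fin n → ℝ) →ₗ[ℚ] ℝ,
      interior (closure (T '' {x : Fin n → ℝ | ∀ i, x i ∈ E})) = ∅) :
    AddSubgroup.closure E ≠ ⊤ := by
  rcases Set.eq_empty_or_nonempty E with rfl | ⟨e₀, he₀⟩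
  · rw [AddSubgroup.closure_empty]
    intro hbot
    have : (1 : ℝ) ∈ (⊥ : AddSubgroup ℝ) := hbot ▸ AddSubgroup.mem_top 1
    simp at this
  intro htop
  -- the linear maps
  have hTmk : ∀ n : ℕ, ∀ u : Fin n → ℤ, ∃ T : (Fin n → ℝ) →ₗ[ℚ] ℝ,
      ∀ x, T x = ∑ i, (u i : ℝ) * x i := by
    intro n u
    refine ⟨{ toFun := fun x => ∑ i, (u i : ℝ) * x i
              map_add' := ?_, map_smul' := ?_ }, fun _ => rfl⟩
    · intro x y; simp [mul_add, Finset.sum_add_distrib]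
    · intro c x
      simp only [Pi.smul_apply, smul_eq_mul, RingHom.id_apply, Rat.smul_def, Finset.mul_sum]
      congr 1; funext i; ring
  choose T hTval using hTmk
  -- the closed sets
  set S : (Σ n : ℕ, Fin (n + 1) → ℤ) → Set ℝ := fun p =>
    (T (p.1 + 1) p.2) '' {x : Fin (p.1 + 1) → ℝ | ∀ i, x i ∈ E} with hS
  have hset : ∀ n : ℕ, {x : Fin n → ℝ | ∀ i, x i ∈ E} = Set.pi Set.univ (fun _ => E) := by
    intro n; ext x; simp [Set.mem_pi]
  have hScompact : ∀ p, IsCompact (S p) := by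
    rintro ⟨n, u⟩
    have hcont : Continuous fun x : Fin (n + 1) → ℝ => (T (n + 1) u) x := by
      have : (fun x : Fin (n + 1) → ℝ => (T (n + 1) u) x)
          = fun x => ∑ i, (u i : ℝ) * x i := funext fun x => hTval _ _ x
      rw [this]
      exact continuous_finset_sum _ fun i _ => continuous_const.mul (continuous_apply i)
    simpa only [hS, hset] using (isCompact_univ_pi fun _ : Fin (n + 1) => hE).image hcont
  have hSclosed : ∀ p, IsClosed (S p) := fun p => (hScompact p).isClosed
  have hSint : ∀ p, interior (S p) = ∅ := by
    rintro ⟨n, u⟩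
    have := h (n + 1) (by omega) (T (n + 1) u)
    rwa [(hSclosed ⟨n, u⟩).closure_eq] at this
  -- covering
  have hcover : ⋃ p, S p = Set.univ := by
    apply Set.eq_univ_of_forall
    intro x
    have hx : x ∈ Submodule.span ℤ E := by
      have hle : AddSubgroup.closure E ≤ (Submodule.span ℤ E).toAddSubgroup :=
        (AddSubgroup.closure_le _).2 Submodule.subset_span
      exact hle (htop ▸ AddSubgroup.mem_top x)
    rcases Submodule.mem_span_set'.1 hx with ⟨n, f, g, hfg⟩
    refine Set.mem_iUnion.2 ⟨⟨n, fun i => if hi : (i : ℕ) < n then f ⟨i, hi⟩ else 0⟩, ?_⟩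
    refine ⟨fun i => if hi : (i : ℕ) < n then (g ⟨i, hi⟩ : ℝ) else e₀, ?_, ?_⟩
    · intro i
      dsimp only
      split
      · exact (g _).2
      · exact he₀
    · rw [hTval]
      rw [Fin.sum_univ_castSucc]
      have hlast : ¬ ((Fin.last n : Fin (n + 1)) : ℕ) < n := by simp
      simp only [dif_neg hlast, Fin.coe_castSucc, Fin.is_lt, dif_pos, Int.cast_zero, zero_mul,
        add_zero]
      rw [← hfg]
      congr 1
      funext i
      simp [zsmul_eq_mul]
  obtain ⟨p, hp⟩ := nonempty_interior_of_iUnion_of_closed hSclosed hcover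
  rw [hSint p] at hp
  exact hp.ne_empty rfl
end

section
/- Let E ⊆ ℝ be compact. If the subgroup of (ℝ,+) generated by E equals all of ℝ, then there exist n ≥ 1 and a ℚ-linear map T : ℝⁿ → ℝ such that T(Eⁿ) has nonempty interior (in particular is somewhere dense). -/
/-- The ℚ-linear map `x ↦ ∑ i, u i * x i`. -/
def Tmap (n : ℕ) (u : Fin n → ℤ) : (Fin n → ℝ) →ₗ[ℚ] ℝ where
  toFun x := ∑ i, (u i : ℝ) * x i
  map_add' x y := by simp [mul_add, Finset.sum_add_distrib]
  map_smul' q x := by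
    simp only [Pi.smul_apply, Rat.smul_def, RingHom.id_apply, Finset.mul_sum]
    exact Finset.sum_congr rfl fun i _ => by ring

/-- if `E ⊆ ℝ` is compact and the subgroup of `(ℝ, +)` generated by `E` is all
of ℝ, then there are `n ≥ 1` and a ℚ-linear `T : ℝⁿ → ℝ` such that `T(Eⁿ)` has nonempty
interior. -/
theorem stmt7 (E : Set ℝ) (hE : IsCompact E) (h : AddSubgroup.closure E = ⊤) :
    ∃ n : ℕ, 1 ≤ n ∧ ∃ T : (Fin n → ℝ) →ₗ[ℚ] ℝ,
      (interior (T '' {x : Fin n → ℝ | ∀ i, x i ∈ E})).Nonempty := by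
  classical
  -- the countable family of closed sets
  set f : (Σ n : ℕ, Fin n → ℤ) → Set ℝ := fun p =>
    (Tmap p.1 p.2) '' {x : Fin p.1 → ℝ | ∀ i, x i ∈ E} with hf
  have hclosed : ∀ p, IsClosed (f p) := by
    intro p
    have hc : IsCompact {x : Fin p.1 → ℝ | ∀ i, x i ∈ E} := by
      have := isCompact_univ_pi (fun _ : Fin p.1 => hE)
      simpa [Set.pi, Set.mem_univ] using this
    have : Continuous (Tmap p.1 p.2) := by
      have : Continuous fun x : Fin p.1 → ℝ => ∑ i, (p.2 i : ℝ) * x i := by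
        continuity
      exact this
    exact (hc.image this).isClosed
  have hcover : ⋃ p, f p = Set.univ := by
    apply Set.eq_univ_of_forall
    intro r
    have hr : r ∈ Submodule.span ℤ E := by
      have : r ∈ AddSubgroup.closure E := h ▸ AddSubgroup.mem_top r
      rwa [← Submodule.span_int_eq_addSubgroupClosure] at this
    rw [Submodule.mem_span_set'] at hr
    obtain ⟨n, c, g, hsum⟩ := hr
    refine Set.mem_iUnion.2 ⟨⟨n, c⟩, ⟨fun i => (g i : ℝ), fun i => (g i).2, ?_⟩⟩
    simp only [Tmap, LinearMap.coe_mk, AddHom.coe_mk]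
    rw [← hsum]
    congr 1
    ext i
    simp [zsmul_eq_mul]
  obtain ⟨p, hp⟩ := nonempty_interior_of_iUnion_of_closed hclosed hcover
  obtain ⟨n, u⟩ := p
  have hn : 1 ≤ n := by
    by_contra hn
    push_neg at hn
    interval_cases n
    have hsub : ({x : Fin 0 → ℝ | ∀ i, x i ∈ E}).Subsingleton := by
      intro a _ b _; ext i; exact absurd i.2 (Nat.not_lt_zero _)
    have : (f ⟨0, u⟩).Subsingleton := hsub.image _
    rcases this.eq_empty_or_singleton with h0 | ⟨a, h0⟩ <;>
      simp [h0, interior_singleton] at hp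
  exact ⟨n, hn, Tmap n u, hp⟩
end

section
/- The set X = { (x, t + sin x) : t ∈ πℤ, x ∈ ℝ } ⊆ ℝ² is closed and has no affine points: there is no point p ∈ X and open neighborhood U of p such that U ∩ X = U ∩ H for some affine line or affine subspace H of ℝ². -/
/-!
`X` is the zero set of `(x, y) ↦ sin (y - sin x)`, hence closed.
Near a point `p = (x₀, kπ + sin x₀)` of `X`, the set is the graph of `y ↦ kπ + sin y`, while the
other points of `X` on the vertical line through `p` lie at distance at least `π` from `p`.
If `U ∩ X = U ∩ H`, the second fact keeps the vertical direction out of `H.direction`, so all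
secants of the graph at `p` are parallel and `sin` is affine near `x₀`. Since `sin` is analytic,
it would then be affine on all of `ℝ`, which it is not.
-/

/-- The set `X = {(x, t + sin x) : t ∈ πℤ, x ∈ ℝ}`. -/
def sinSet : Set (ℝ × ℝ) :=
  {p : ℝ × ℝ | ∃ (k : ℤ) (x : ℝ), p = (x, k * Real.pi + Real.sin x)}

open Real Filter Topology

lemma mem_sinSet_iff (p : ℝ × ℝ) : p ∈ sinSet ↔ sin (p.2 - sin p.1) = 0 := by
  rw [sin_eq_zero_iff]
  constructor
  · rintro ⟨k, x, rfl⟩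
    exact ⟨k, by ring⟩
  · rintro ⟨k, hk⟩
    exact ⟨k, p.1, Prod.ext rfl (by linarith)⟩

lemma isClosed_sinSet : IsClosed sinSet := by
  rw [show sinSet = {p | sin (p.2 - sin p.1) = 0} from Set.ext mem_sinSet_iff]
  exact isClosed_eq (by fun_prop) continuous_const

lemma sin_eq_zero_of_mem_sinSet {x y η : ℝ} (h : (x, y) ∈ sinSet)
    (hη : (x, y + η) ∈ sinSet) : sin η = 0 := by
  rw [mem_sinSet_iff] at h hη
  rw [show η = (y + η - sin x) - (y - sin x) by ring, sin_sub, h, hη]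
  ring

lemma Submodule.eq_top_of_mem_of_mul_sub_mul_ne_zero {K : Type*} [Field K]
    {D : Submodule K (K × K)} {u v : K × K} (hu : u ∈ D) (hv : v ∈ D)
    (huv : u.1 * v.2 - u.2 * v.1 ≠ 0) : D = ⊤ := by
  refine eq_top_iff.mpr fun w _ => ?_
  have hw : w = ((w.1 * v.2 - w.2 * v.1) / (u.1 * v.2 - u.2 * v.1)) • u
      + ((u.1 * w.2 - u.2 * w.1) / (u.1 * v.2 - u.2 * v.1)) • v := by
    ext <;> simp only [Prod.fst_add, Prod.snd_add, Prod.smul_fst, Prod.smul_snd, smul_eq_mul]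
      <;> rw [div_mul_eq_mul_div, div_mul_eq_mul_div, ← add_div, eq_div_iff huv] <;> ring
  rw [hw]
  exact D.add_mem (D.smul_mem _ hu) (D.smul_mem _ hv)

lemma Real.not_eventually_sin_eq_affine (x₀ a c : ℝ) : ¬ ∀ᶠ y in 𝓝 x₀, sin y = a + c * y := by
  intro h
  have hsin : sin = fun y => a + c * y :=
    analyticOnNhd_sin.eq_of_eventuallyEq (fun _ _ => by fun_prop) h
  have h0 := congrFun hsin 0
  have hπ := congrFun hsin π
  have hπ2 := congrFun hsin (π / 2)
  simp only [sin_zero, mul_zero, add_zero, sin_pi, sin_pi_div_two] at h0 hπ hπ2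
  have hc : c = 0 := by
    subst h0
    simpa [pi_ne_zero] using hπ
  rw [hc, ← h0] at hπ2
  norm_num at hπ2

lemma eventually_eq_affine_of_eventually_mem {f : ℝ → ℝ} {x₀ : ℝ} {D : Submodule ℝ (ℝ × ℝ)}
    (hD : ((0, 1) : ℝ × ℝ) ∉ D) (hf : ∀ᶠ y in 𝓝 x₀, (y - x₀, f y - f x₀) ∈ D) :
    ∃ a c : ℝ, ∀ᶠ y in 𝓝 x₀, f y = a + c * y := by
  obtain ⟨t, ht, htx⟩ := ((hf.filter_mono nhdsWithin_le_nhds).and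
    (self_mem_nhdsWithin : {x₀}ᶜ ∈ 𝓝[≠] x₀)).exists
  have ht₀ : t - x₀ ≠ 0 := sub_ne_zero.mpr htx
  set c := (f t - f x₀) / (t - x₀)
  refine ⟨f x₀ - c * x₀, c, ?_⟩
  filter_upwards [hf] with y hy
  by_contra hne
  refine hD (Submodule.eq_top_iff'.mp
    (Submodule.eq_top_of_mem_of_mul_sub_mul_ne_zero ht hy fun hdet => hne ?_) _)
  simp only at hdet
  have hslope : f y - f x₀ = c * (y - x₀) := by
    rw [div_mul_eq_mul_div, eq_div_iff ht₀]
    linarith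
  linarith

section LocallyAffine

variable {U : Set (ℝ × ℝ)} {H : AffineSubspace ℝ (ℝ × ℝ)}

lemma zero_one_notMem_direction_of_inter_sinSet_eq {p : ℝ × ℝ} (hU : IsOpen U) (hpU : p ∈ U)
    (hp : p ∈ sinSet) (hUH : U ∩ sinSet = U ∩ H) : ((0, 1) : ℝ × ℝ) ∉ H.direction := by
  intro hvert
  have hpH : p ∈ H := (hUH.subset ⟨hpU, hp⟩).2
  have hnearU : ∀ᶠ η in 𝓝[>] (0 : ℝ), (p.1, p.2 + η) ∈ U := by
    have hcont : Continuous fun η : ℝ => (p.1, p.2 + η) := by fun_prop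
    exact (hcont.tendsto' 0 p (by simp) |>.eventually (hU.mem_nhds hpU)).filter_mono
      nhdsWithin_le_nhds
  obtain ⟨η, hηU, hη0, hηπ⟩ := (hnearU.and (Ioo_mem_nhdsGT pi_pos)).exists
  have hηH : (p.1, p.2 + η) ∈ H := by
    convert AffineSubspace.vadd_mem_of_mem_direction (H.direction.smul_mem η hvert) hpH
      using 1
    ext <;> simp [add_comm]
  have hsin := sin_eq_zero_of_mem_sinSet hp (hUH.symm.subset ⟨hηU, hηH⟩).2
  linarith [sin_pos_of_pos_of_lt_pi hη0 hηπ]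

lemma eventually_sin_secant_mem_direction {k : ℤ} {x₀ : ℝ} (hU : IsOpen U)
    (hpU : (x₀, k * π + sin x₀) ∈ U) (hUH : U ∩ sinSet = U ∩ H) :
    ∀ᶠ y in 𝓝 x₀, (y - x₀, sin y - sin x₀) ∈ H.direction := by
  have hcont : Continuous fun y : ℝ => (y, k * π + sin y) := by fun_prop
  have hnearU := (hcont.tendsto x₀).eventually (hU.mem_nhds hpU)
  have hpH : (x₀, k * π + sin x₀) ∈ H := (hUH.subset ⟨hpU, k, x₀, rfl⟩).2
  filter_upwards [hnearU] with y hyU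
  have hyH : (y, k * π + sin y) ∈ H := (hUH.subset ⟨hyU, k, y, rfl⟩).2
  convert AffineSubspace.vsub_mem_direction hyH hpH using 1
  ext <;> simp

end LocallyAffine

/-- `X = {(x, t + sin x) : t ∈ πℤ, x ∈ ℝ}` is closed and has no affine
points. -/
theorem stmt12 :
    IsClosed sinSet ∧
      ∀ p ∈ sinSet, ∀ U : Set (ℝ × ℝ), IsOpen U → p ∈ U →
        ∀ H : AffineSubspace ℝ (ℝ × ℝ), U ∩ sinSet ≠ U ∩ (H : Set (ℝ × ℝ)) := by
  refine ⟨isClosed_sinSet, fun p hp U hU hpU H hUH => ?_⟩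
  have hvert := zero_one_notMem_direction_of_inter_sinSet_eq hU hpU hp hUH
  obtain ⟨k, x₀, rfl⟩ := hp
  obtain ⟨a, c, hsin⟩ := eventually_eq_affine_of_eventually_mem hvert
    (eventually_sin_secant_mem_direction hU hpU hUH)
  exact not_eventually_sin_eq_affine x₀ a c hsin
end
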